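/- Let ε ∈ (0,1], t ∈ [0,ε], ρ(y) = exp(y²/(8(1+t/ε))), ⟨ξ⟩ = (1+ξ²)^{1/2} and θ_ξ(y) = 1 − exp(−y²⟨ξ⟩²/(2(1+t/ε))). There is a universal constant C (independent of ξ, t, ε) such that the second y-derivative of θ_ξ satisfies ‖y ρ² ∂_{yy}θ_ξ‖_{L²_y(0,∞)} ≤ C ⟨ξ⟩^{1/2} for every ξ ∈ ℝ. -/
import Mathlib


open MeasureTheory Set Filter

noncomputable section

/-- Gaussian weight `ρ(y) = exp(y²/(8(1+t/ε)))`. -/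
def rho (ε t y : ℝ) : ℝ := Real.exp (y ^ 2 / (8 * (1 + t / ε)))

/-- Japanese bracket `⟨ξ⟩ = √(1+ξ²)`. -/
def brak (ξ : ℝ) : ℝ := Real.sqrt (1 + ξ ^ 2)

/-- Second `y`-derivative of the lift function `θ_ξ(y) = 1 − exp(−y²⟨ξ⟩²/(2(1+t/ε)))`:
`∂_{yy}θ_ξ(y) = (⟨ξ⟩²/(1+t/ε))(1 − y²⟨ξ⟩²/(1+t/ε)) exp(−y²⟨ξ⟩²/(2(1+t/ε)))`. -/
def dyyTheta (ε t ξ y : ℝ) : ℝ :=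
  ((1 + ξ ^ 2) / (1 + t / ε)) * (1 - y ^ 2 * (1 + ξ ^ 2) / (1 + t / ε)) *
    Real.exp (-(y ^ 2 * (1 + ξ ^ 2)) / (2 * (1 + t / ε)))

/-- Elementary polynomial-times-exponential bound. -/
lemma poly_exp_bound (s : ℝ) (hs : 0 ≤ s) :
    s * (1 - s) ^ 2 * Real.exp (-(s / 2)) ≤ 1728 * Real.exp (-(s / 4)) := by
  have h2 : 1 + s ≤ 12 * Real.exp (s / 12) := by
    have h := Real.add_one_le_exp (s / 12)
    nlinarith
  have he : Real.exp (s / 12) ^ 3 = Real.exp (s / 4) := by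
    rw [← Real.exp_nat_mul]; push_cast; ring_nf
  have h3 : (1 + s) ^ 3 ≤ 1728 * Real.exp (s / 4) := by
    calc (1 + s) ^ 3 ≤ (12 * Real.exp (s / 12)) ^ 3 :=
          pow_le_pow_left₀ (by linarith) h2 3
      _ = 1728 * Real.exp (s / 12) ^ 3 := by ring
      _ = 1728 * Real.exp (s / 4) := by rw [he]
  have h1 : s * (1 - s) ^ 2 ≤ (1 + s) ^ 3 := by nlinarith [sq_nonneg s, sq_nonneg (1 - s)]
  calc s * (1 - s) ^ 2 * Real.exp (-(s / 2))
      ≤ (1728 * Real.exp (s / 4)) * Real.exp (-(s / 2)) :=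
        mul_le_mul_of_nonneg_right (h1.trans h3) (Real.exp_nonneg _)
    _ = 1728 * Real.exp (s / 4 + -(s / 2)) := by rw [mul_assoc, ← Real.exp_add]
    _ = 1728 * Real.exp (-(s / 4)) := by ring_nf

/-- **Bound (4.20) of the paper**: `‖y ρ² ∂_{yy}θ_ξ‖_{L²_y(0,∞)} ≤ C ⟨ξ⟩^{1/2}` with a
universal constant `C` independent of `ξ`, `t`, `ε`. -/
theorem dyyTheta_L2_bound :
    ∃ C : ℝ, 0 < C ∧ ∀ ε t ξ : ℝ, 0 < ε → ε ≤ 1 → 0 ≤ t → t ≤ ε →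
      Real.sqrt (∫ y in Ioi (0 : ℝ), (y * (rho ε t y) ^ 2 * dyyTheta ε t ξ y) ^ 2)
        ≤ C * brak ξ ^ ((1 : ℝ) / 2) := by
  refine ⟨Real.sqrt (1728 * Real.sqrt Real.pi), Real.sqrt_pos.2 (by positivity), ?_⟩
  intro ε t ξ hε hε1 ht htε
  set a : ℝ := 1 + t / ε with ha
  have ha1 : 1 ≤ a := by
    have : 0 ≤ t / ε := div_nonneg ht hε.le
    simp only [ha]; linarith
  have ha0 : 0 < a := by linarith
  set b : ℝ := 1 + ξ ^ 2 with hb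
  have hb1 : 1 ≤ b := by nlinarith [sq_nonneg ξ]
  have hb0 : 0 < b := by linarith
  set c : ℝ := b / a with hc
  have hc0 : 0 < c := div_pos hb0 ha0
  have hcb : c ≤ b := by
    rw [hc, div_le_iff₀ ha0]; nlinarith
  -- pointwise bound of the integrand by a Gaussian
  have hpt : ∀ y : ℝ, (y * (rho ε t y) ^ 2 * dyyTheta ε t ξ y) ^ 2
      ≤ 1728 * c * Real.exp (-(c / 4) * y ^ 2) := by
    intro y
    have hs : 0 ≤ c * y ^ 2 := by positivity
    have hA : ∀ u v P : ℝ, (y * Real.exp u ^ 2 * (c * P * Real.exp v)) ^ 2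
        = y ^ 2 * c ^ 2 * P ^ 2 * Real.exp (4 * u + 2 * v) := by
      intro u v P
      rw [show (4 : ℝ) * u + 2 * v = ((4 : ℕ) : ℝ) * u + ((2 : ℕ) : ℝ) * v by norm_num,
        Real.exp_add, Real.exp_nat_mul, Real.exp_nat_mul]
      ring
    have hid : (y * (rho ε t y) ^ 2 * dyyTheta ε t ξ y) ^ 2
        = c * ((c * y ^ 2) * (1 - c * y ^ 2) ^ 2 *
            Real.exp ((c * y ^ 2) / (2 * b) - c * y ^ 2)) := by
      simp only [rho, dyyTheta, ← ha, ← hb, ← hc]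
      rw [hA (y ^ 2 / (8 * a)) (-(y ^ 2 * b) / (2 * a)) (1 - y ^ 2 * b / a)]
      have hexp : 4 * (y ^ 2 / (8 * a)) + 2 * (-(y ^ 2 * b) / (2 * a))
          = (c * y ^ 2) / (2 * b) - c * y ^ 2 := by
        rw [hc]; field_simp; ring
      have hcoef : y ^ 2 * c ^ 2 * (1 - y ^ 2 * b / a) ^ 2
          = c * ((c * y ^ 2) * (1 - c * y ^ 2) ^ 2) := by
        rw [hc]; field_simp
      rw [hexp]
      rw [show c * ((c * y ^ 2) * (1 - c * y ^ 2) ^ 2 *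
            Real.exp ((c * y ^ 2) / (2 * b) - c * y ^ 2))
          = c * ((c * y ^ 2) * (1 - c * y ^ 2) ^ 2) *
            Real.exp ((c * y ^ 2) / (2 * b) - c * y ^ 2) by ring, ← hcoef]
    rw [hid]
    have hexple : Real.exp ((c * y ^ 2) / (2 * b) - c * y ^ 2)
        ≤ Real.exp (-(c * y ^ 2 / 2)) := by
      apply Real.exp_le_exp.2
      rw [sub_le_iff_le_add, div_le_iff₀ (by positivity : (0:ℝ) < 2 * b)]
      nlinarith
    have hbound := poly_exp_bound (c * y ^ 2) hs
    have hstep : (c * y ^ 2) * (1 - c * y ^ 2) ^ 2 *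
          Real.exp ((c * y ^ 2) / (2 * b) - c * y ^ 2)
        ≤ 1728 * Real.exp (-(c * y ^ 2 / 4)) := by
      calc (c * y ^ 2) * (1 - c * y ^ 2) ^ 2 *
            Real.exp ((c * y ^ 2) / (2 * b) - c * y ^ 2)
          ≤ (c * y ^ 2) * (1 - c * y ^ 2) ^ 2 * Real.exp (-(c * y ^ 2 / 2)) := by
            apply mul_le_mul_of_nonneg_left hexple (by positivity)
        _ ≤ 1728 * Real.exp (-(c * y ^ 2 / 4)) := hbound
    calc c * ((c * y ^ 2) * (1 - c * y ^ 2) ^ 2 *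
          Real.exp ((c * y ^ 2) / (2 * b) - c * y ^ 2))
        ≤ c * (1728 * Real.exp (-(c * y ^ 2 / 4))) :=
          mul_le_mul_of_nonneg_left hstep hc0.le
      _ = 1728 * c * Real.exp (-(c / 4) * y ^ 2) := by rw [show -(c / 4) * y ^ 2 = -(c * y ^ 2 / 4) by ring]; ring
  -- the Gaussian majorant is integrable
  have hg_int : IntegrableOn (fun y : ℝ => 1728 * c * Real.exp (-(c / 4) * y ^ 2)) (Ioi 0) := by
    exact (((integrable_exp_neg_mul_sq (by positivity : (0:ℝ) < c / 4)).const_mul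
      (1728 * c)).integrableOn)
  have hIle : (∫ y in Ioi (0 : ℝ), (y * (rho ε t y) ^ 2 * dyyTheta ε t ξ y) ^ 2)
      ≤ ∫ y in Ioi (0 : ℝ), 1728 * c * Real.exp (-(c / 4) * y ^ 2) := by
    apply integral_mono_of_nonneg (ae_of_all _ fun y => sq_nonneg _) hg_int
      (ae_of_all _ fun y => hpt y)
  -- compute the Gaussian integral
  have hgauss : (∫ y in Ioi (0 : ℝ), 1728 * c * Real.exp (-(c / 4) * y ^ 2))
      = 1728 * c * (Real.sqrt (Real.pi / (c / 4)) / 2) := by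
    rw [MeasureTheory.integral_const_mul, integral_gaussian_Ioi]
  have hsqc : Real.sqrt c ≠ 0 := by positivity
  have h4 : Real.pi / (c / 4) = 4 * Real.pi / c := by field_simp
  have hval : 1728 * c * (Real.sqrt (Real.pi / (c / 4)) / 2)
      = 1728 * Real.sqrt Real.pi * Real.sqrt c := by
    rw [h4, Real.sqrt_div (by positivity : (0:ℝ) ≤ 4 * Real.pi) c,
      Real.sqrt_mul (by norm_num : (0:ℝ) ≤ 4),
      show Real.sqrt 4 = 2 by rw [show (4:ℝ) = 2 ^ 2 by norm_num, Real.sqrt_sq]; norm_num]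
    rw [show (1728 : ℝ) * c * (2 * Real.sqrt Real.pi / Real.sqrt c / 2)
        = 1728 * Real.sqrt Real.pi * (c / Real.sqrt c) by ring, Real.div_sqrt]
  have hfin : (∫ y in Ioi (0 : ℝ), (y * (rho ε t y) ^ 2 * dyyTheta ε t ξ y) ^ 2)
      ≤ 1728 * Real.sqrt Real.pi * Real.sqrt b := by
    calc (∫ y in Ioi (0 : ℝ), (y * (rho ε t y) ^ 2 * dyyTheta ε t ξ y) ^ 2)
        ≤ 1728 * Real.sqrt Real.pi * Real.sqrt c := by rw [← hval, ← hgauss]; exact hIle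
      _ ≤ 1728 * Real.sqrt Real.pi * Real.sqrt b := by
          apply mul_le_mul_of_nonneg_left (Real.sqrt_le_sqrt hcb) (by positivity)
  calc Real.sqrt (∫ y in Ioi (0 : ℝ), (y * (rho ε t y) ^ 2 * dyyTheta ε t ξ y) ^ 2)
      ≤ Real.sqrt (1728 * Real.sqrt Real.pi * Real.sqrt b) := Real.sqrt_le_sqrt hfin
    _ = Real.sqrt (1728 * Real.sqrt Real.pi) * Real.sqrt (Real.sqrt b) := by
        rw [Real.sqrt_mul (by positivity)]
    _ = Real.sqrt (1728 * Real.sqrt Real.pi) * brak ξ ^ ((1 : ℝ) / 2) := by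
        rw [show Real.sqrt b = brak ξ by rw [brak, hb], Real.sqrt_eq_rpow (brak ξ)]
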